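/- arXiv:1809.02759 — 7 statements merged into one kernel-verified Lean document; each statement's English description precedes it below -/
import Mathlib

section
/- Every positive non-constant maximal solution of the ODE (y'/y)' + y² = 0 is of the form y(t) = 2c·e^{±(ct + c₁)}/(1 + e^{±2(ct+c₁)}) for some constants c > 0 and c₁ ∈ ℝ. -/
open Real


lemma const_on {s : Set ℝ} (hso : IsOpen s) (hs : Convex ℝ s) {f : ℝ → ℝ}
    (hf : ∀ x ∈ s, HasDerivAt f 0 x) {a b : ℝ} (ha : a ∈ s) (hb : b ∈ s) :
    f a = f b := by
  apply hs.is_const_of_fderivWithin_eq_zero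
    (fun x hx => ((hf x hx).differentiableAt).differentiableWithinAt) ?_ ha hb
  intro z hz
  rw [fderivWithin_of_isOpen hso hz, ((hf z hz).hasFDerivAt).fderiv]
  ext
  simp

/-- A positive solution of the ODE (y'/y)' + y² = 0 on a set J. -/
def IsPosSol (J : Set ℝ) (y : ℝ → ℝ) : Prop :=
  ContDiffOn ℝ (⊤ : ℕ∞) y J ∧
    ∀ t ∈ J, 0 < y t ∧ deriv (fun u => deriv y u / y u) t + (y t) ^ 2 = 0

/-- Every positive non-constant maximal solution of (y'/y)' + y² = 0
is of the form y(t) = 2c·e^{±(ct+c₁)}/(1+e^{±2(ct+c₁)}) for some c > 0, c₁ ∈ ℝ. -/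
theorem stmt_4 (I : Set ℝ) (hIopen : IsOpen I) (hIconn : IsPreconnected I)
    (hIne : I.Nonempty) (y : ℝ → ℝ)
    (hsol : IsPosSol I y)
    (hnonconst : ¬ ∃ k : ℝ, ∀ t ∈ I, y t = k)
    (hmax : ∀ (J : Set ℝ) (z : ℝ → ℝ), IsOpen J → IsPreconnected J → I ⊆ J →
      (∀ t ∈ I, z t = y t) → IsPosSol J z → J = I) :
    ∃ c > (0:ℝ), ∃ c₁ : ℝ, ∃ ε : ℝ, (ε = 1 ∨ ε = -1) ∧
      ∀ t ∈ I, y t = 2 * c * Real.exp (ε * (c * t + c₁)) /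
        (1 + Real.exp (ε * 2 * (c * t + c₁))) := by
  obtain ⟨hsmooth, hode⟩ := hsol
  have hconv : Convex ℝ I := hIconn.ordConnected.convex
  have hpos : ∀ t ∈ I, 0 < y t := fun t ht => (hode t ht).1
  set v : ℝ → ℝ := fun u => deriv y u / y u with hv_def
  -- v is differentiable with derivative -y^2 at each point of I
  have hv : ∀ t ∈ I, HasDerivAt v (-(y t)^2) t := by
    intro t ht
    have heq : deriv v t + (y t)^2 = 0 := (hode t ht).2
    have hdiff : DifferentiableAt ℝ v t := by
      by_contra h
      rw [deriv_zero_of_not_differentiableAt h] at heq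
      nlinarith [hpos t ht]
    have := hdiff.hasDerivAt
    rwa [show deriv v t = -(y t)^2 by linarith] at this
  -- y' = v * y
  have hy : ∀ t ∈ I, HasDerivAt y (v t * y t) t := by
    intro t ht
    have hd : DifferentiableAt ℝ y t :=
      (hsmooth.contDiffAt (hIopen.mem_nhds ht)).differentiableAt (by simp)
    have := hd.hasDerivAt
    rwa [show deriv y t = v t * y t by
      have hne := (hpos t ht).ne'
      simp only [hv_def]; field_simp] at this
  -- energy conservation
  obtain ⟨t₀, ht₀⟩ := hIne
  have hE : ∀ t ∈ I, (v t)^2 + (y t)^2 = (v t₀)^2 + (y t₀)^2 := by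
    intro t ht
    have : ∀ x ∈ I, HasDerivAt (fun u => (v u)^2 + (y u)^2) 0 x := by
      intro x hx
      have h1 := ((hv x hx).fun_pow 2).fun_add ((hy x hx).fun_pow 2)
      refine h1.congr_deriv ?_
      ring
    exact const_on hIopen hconv this ht ht₀
  set c : ℝ := Real.sqrt ((v t₀)^2 + (y t₀)^2) with hc_def
  have hcpos : 0 < c := Real.sqrt_pos.2 (by nlinarith [hpos t₀ ht₀])
  have hc2 : ∀ t ∈ I, (v t)^2 + (y t)^2 = c^2 := by
    intro t ht
    rw [hE t ht, hc_def, Real.sq_sqrt (by nlinarith [hpos t₀ ht₀])]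
  have hvlt : ∀ t ∈ I, -c < v t ∧ v t < c := by
    intro t ht
    constructor <;> nlinarith [hc2 t ht, hpos t ht]
  -- w = log(c+v) - log(c-v), w' = -2c
  set w : ℝ → ℝ := fun u => Real.log (c + v u) - Real.log (c - v u) with hw_def
  have hw : ∀ t ∈ I, HasDerivAt w (-(2*c)) t := by
    intro t ht
    obtain ⟨h1, h2⟩ := hvlt t ht
    have hp1 : 0 < c + v t := by linarith
    have hp2 : 0 < c - v t := by linarith
    have d1 : HasDerivAt (fun u => c + v u) (-(y t)^2) t := by
      simpa using (hv t ht).const_add c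
    have d2 : HasDerivAt (fun u => c - v u) ((y t)^2) t := by
      simpa using (hv t ht).const_sub c
    have := (d1.log hp1.ne').fun_sub (d2.log hp2.ne')
    refine this.congr_deriv ?_
    have hy2 : (c + v t) * (c - v t) = (y t)^2 := by nlinarith [hc2 t ht]
    field_simp
    nlinarith [hpos t ht]
  -- w + 2c t is constant
  have hwconst : ∀ t ∈ I, w t = w t₀ + 2*c*t₀ - 2*c*t := by
    intro t ht
    have : ∀ x ∈ I, HasDerivAt (fun u => w u + 2*c*u) 0 x := by
      intro x hx
      have := (hw x hx).fun_add ((hasDerivAt_id x).const_mul (2*c))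
      refine this.congr_deriv ?_
      ring
    have h := const_on hIopen hconv this ht ht₀
    linarith
  refine ⟨c, hcpos, -(w t₀ + 2*c*t₀)/2, -1, Or.inr rfl, ?_⟩
  intro t ht
  set s : ℝ := c * t + -(w t₀ + 2*c*t₀)/2 with hs_def
  have hws : w t = -2 * s := by rw [hwconst t ht]; ring
  obtain ⟨h1, h2⟩ := hvlt t ht
  have hp1 : 0 < c + v t := by linarith
  have hp2 : 0 < c - v t := by linarith
  have hexp : Real.exp (-2*s) = (c + v t) / (c - v t) := by
    rw [← hws, hw_def]
    rw [Real.exp_sub, Real.exp_log hp1, Real.exp_log hp2]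
  have hcv : c + v t = (c - v t) * Real.exp (-2*s) := by
    rw [hexp]; field_simp
  have hden : (0:ℝ) < 1 + Real.exp (-2*s) := by positivity
  have hcv2 : c - v t = 2*c / (1 + Real.exp (-2*s)) := by
    rw [eq_div_iff hden.ne']
    linear_combination -hcv
  have hy2 : (y t)^2 = (c + v t) * (c - v t) := by nlinarith [hc2 t ht]
  have hRpos : 0 < 2 * c * Real.exp (-1 * s) / (1 + Real.exp (-1 * 2 * s)) := by
    positivity
  have hsq : (y t)^2 = (2 * c * Real.exp (-1 * s) / (1 + Real.exp (-1 * 2 * s)))^2 := by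
    have he : Real.exp (-2*s) = Real.exp (-s) * Real.exp (-s) := by
      rw [← Real.exp_add]; ring_nf
    have he2 : Real.exp (-1*2*s) = Real.exp (-s) * Real.exp (-s) := by
      rw [← Real.exp_add]; ring_nf
    have he1 : Real.exp (-1*s) = Real.exp (-s) := by ring_nf
    have hEpos : (0:ℝ) < Real.exp (-s) := Real.exp_pos _
    rw [hy2, hcv, hcv2, he, he2, he1]
    have hdne : (0:ℝ) < 1 + Real.exp (-s) * Real.exp (-s) := by positivity
    generalize hg : Real.exp (-s) = E at hdne ⊢
    field_simp
  have := hpos t ht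
  have hfin : y t = 2 * c * Real.exp (-1 * s) / (1 + Real.exp (-1 * 2 * s)) := by
    nlinarith [hsq, hRpos, this]
  convert hfin using 3 <;> rw [hs_def]
end

section
/- Let α be a unit-speed curve in ℝ³ with curvature κ > 0 and torsion τ ≠ 0 satisfying κ²τ = σ₁ for a nonzero constant σ₁ and Σ/τ − τ = σ₂ for a constant σ₂, where Σ = (κ'/κ)' + κ² − τ². Then κ satisfies the first-order autonomous ODE (κ')² + κ⁴ + σ₃κ² + σ₁²/κ² + σ₁σ₂ = 0 for some constant σ₃. -/
open Real Metric

lemma const_of_hasDerivAt_zero {f : ℝ → ℝ} {I : Set ℝ} (hI : IsOpen I)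
    (hconn : IsPreconnected I) (hf : ∀ s ∈ I, HasDerivAt f 0 s)
    {a b : ℝ} (ha : a ∈ I) (hb : b ∈ I) : f a = f b := by
  have hloc : ∀ s ∈ I, ∀ᶠ t in nhds s, f t = f s := by
    intro s hs
    obtain ⟨ε, hε, hball⟩ := Metric.isOpen_iff.1 hI s hs
    have hconst : ∀ t ∈ ball s ε, f t = f s := by
      intro t ht
      refine (convex_ball s ε).is_const_of_fderivWithin_eq_zero
        (fun x hx => ((hf x (hball hx)).differentiableAt).differentiableWithinAt)
        (fun x hx => by
          rw [fderivWithin_of_isOpen isOpen_ball hx,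
            (hf x (hball hx)).hasFDerivAt.fderiv]
          ext y; simp) ht (mem_ball_self hε)
    filter_upwards [Metric.ball_mem_nhds s hε] using hconst
  have hU : IsOpen {s | s ∈ I ∧ f s = f b} := by
    rw [isOpen_iff_mem_nhds]
    rintro s ⟨hs, hfs⟩
    filter_upwards [hloc s hs, hI.mem_nhds hs] with t h1 h2
    exact ⟨h2, h1.trans hfs⟩
  have hV : IsOpen {s | s ∈ I ∧ f s ≠ f b} := by
    rw [isOpen_iff_mem_nhds]
    rintro s ⟨hs, hfs⟩
    filter_upwards [hloc s hs, hI.mem_nhds hs] with t h1 h2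
    exact ⟨h2, h1.trans_ne hfs⟩
  by_contra hne
  obtain ⟨x, hxI, ⟨-, hx1⟩, -, hx2⟩ := hconn _ _ hU hV
    (fun s hs => by by_cases h : f s = f b <;> [exact Or.inl ⟨hs, h⟩; exact Or.inr ⟨hs, h⟩])
    ⟨b, hb, hb, rfl⟩ ⟨a, ha, ha, hne⟩
  exact hx2 hx1

/-- If a unit-speed curve has curvature κ > 0 and torsion τ ≠ 0 with
κ²τ = σ₁ ≠ 0 and Σ/τ − τ = σ₂ where Σ = (κ'/κ)' + κ² − τ², then κ satisfies
(κ')² + κ⁴ + σ₃κ² + σ₁²/κ² + σ₁σ₂ = 0 for some constant σ₃. -/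
theorem stmt_5 (I : Set ℝ) (hIopen : IsOpen I) (hIconn : IsPreconnected I)
    (κ τ : ℝ → ℝ) (hκ : ContDiffOn ℝ (⊤ : ℕ∞) κ I) (hτ : ContDiffOn ℝ (⊤ : ℕ∞) τ I)
    (hκpos : ∀ s ∈ I, 0 < κ s) (hτne : ∀ s ∈ I, τ s ≠ 0)
    (σ₁ σ₂ : ℝ) (hσ₁ : σ₁ ≠ 0)
    (h1 : ∀ s ∈ I, κ s ^ 2 * τ s = σ₁)
    (h2 : ∀ s ∈ I,
      (deriv (fun u => deriv κ u / κ u) s + κ s ^ 2 - τ s ^ 2) / τ s - τ s = σ₂) :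
    ∃ σ₃ : ℝ, ∀ s ∈ I,
      (deriv κ s) ^ 2 + κ s ^ 4 + σ₃ * κ s ^ 2 + σ₁ ^ 2 / κ s ^ 2 + σ₁ * σ₂ = 0 := by
  rcases Set.eq_empty_or_nonempty I with hI | ⟨s₀, hs₀⟩
  · exact ⟨0, by simp [hI]⟩
  have hκ' : ContDiffOn ℝ (⊤ : ℕ∞) (deriv κ) I := hκ.deriv_of_isOpen hIopen (by simp)
  set H : ℝ → ℝ := fun u =>
    (deriv κ u / κ u) ^ 2 + κ u ^ 2 + σ₁ ^ 2 / κ u ^ 4 + σ₁ * σ₂ / κ u ^ 2 with hH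
  have hHd : ∀ s ∈ I, HasDerivAt H 0 s := by
    intro s hs
    have hk : κ s ≠ 0 := (hκpos s hs).ne'
    have ht : τ s ≠ 0 := hτne s hs
    have hτval : τ s = σ₁ / κ s ^ 2 := by
      field_simp
      linear_combination h1 s hs
    have hκat : ContDiffAt ℝ (⊤ : ℕ∞) κ s := hκ.contDiffAt (hIopen.mem_nhds hs)
    have hκ'at : ContDiffAt ℝ (⊤ : ℕ∞) (deriv κ) s := hκ'.contDiffAt (hIopen.mem_nhds hs)
    have hκder : HasDerivAt κ (deriv κ s) s :=
      (hκat.differentiableAt (by simp)).hasDerivAt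
    have hfat : DifferentiableAt ℝ (fun u => deriv κ u / κ u) s :=
      ((hκ'at.div hκat hk).differentiableAt (by simp))
    have hfder : HasDerivAt (fun u => deriv κ u / κ u)
        (deriv (fun u => deriv κ u / κ u) s) s := hfat.hasDerivAt
    have hD : deriv (fun u => deriv κ u / κ u) s
        = σ₂ * τ s + 2 * τ s ^ 2 - κ s ^ 2 := by
      have h := h2 s hs
      field_simp at h
      linarith
    -- build the derivative of H
    have big : HasDerivAt H
        (2 * (deriv κ s / κ s) ^ 1 * (deriv (fun u => deriv κ u / κ u) s)
          + 2 * κ s ^ 1 * deriv κ s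
          + (0 * κ s ^ 4 - σ₁ ^ 2 * (4 * κ s ^ 3 * deriv κ s)) / (κ s ^ 4) ^ 2
          + (0 * κ s ^ 2 - σ₁ * σ₂ * (2 * κ s ^ 1 * deriv κ s)) / (κ s ^ 2) ^ 2) s := by
      exact (((hfder.pow 2).add (hκder.pow 2)).add
        ((hasDerivAt_const s (σ₁ ^ 2)).div (hκder.pow 4) (pow_ne_zero 4 hk))).add
        ((hasDerivAt_const s (σ₁ * σ₂)).div (hκder.pow 2) (pow_ne_zero 2 hk))
    convert big using 1
    rw [hD, hτval]
    field_simp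
    ring
  obtain ⟨σ₃, hσ₃⟩ : ∃ c : ℝ, ∀ s ∈ I, H s = -c :=
    ⟨-(H s₀), fun s hs => by
      rw [neg_neg]; exact const_of_hasDerivAt_zero hIopen hIconn hHd hs hs₀⟩
  refine ⟨σ₃, fun s hs => ?_⟩
  have hk : κ s ≠ 0 := (hκpos s hs).ne'
  have key : (deriv κ s) ^ 2 + κ s ^ 4 + σ₃ * κ s ^ 2 + σ₁ ^ 2 / κ s ^ 2 + σ₁ * σ₂
      = (H s + σ₃) * κ s ^ 2 := by
    rw [hH]
    field_simp
    ring
  rw [key, hσ₃ s hs]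
  ring
end

section
/- Let σ₁ ≠ 0, σ₂ be constants and let κ : I → ℝ be a positive smooth solution of (κ')² + κ⁴ + σ₃κ² + σ₁²/κ² + σ₁σ₂ = 0 with κ' nonvanishing, and set τ := σ₁/κ². Then Σ/τ − τ = σ₂ and Σ + R² + κ² = −σ₃, where Σ = (κ'/κ)' + κ² − τ² and R = κ'/κ + τ'/τ. -/
open Real

/-- If κ > 0 is a smooth solution of
(κ')² + κ⁴ + σ₃κ² + σ₁²/κ² + σ₁σ₂ = 0 with κ' nonvanishing and τ := σ₁/κ², then
Σ/τ − τ = σ₂ and Σ + R² + κ² = −σ₃, where Σ = (κ'/κ)' + κ² − τ² and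
R = κ'/κ + τ'/τ. -/
theorem stmt_6 (I : Set ℝ) (hIopen : IsOpen I)
    (σ₁ σ₂ σ₃ : ℝ) (hσ₁ : σ₁ ≠ 0)
    (κ τ : ℝ → ℝ) (hκ : ContDiffOn ℝ (⊤ : ℕ∞) κ I)
    (hκpos : ∀ s ∈ I, 0 < κ s) (hκ' : ∀ s ∈ I, deriv κ s ≠ 0)
    (hode : ∀ s ∈ I,
      (deriv κ s) ^ 2 + κ s ^ 4 + σ₃ * κ s ^ 2 + σ₁ ^ 2 / κ s ^ 2 + σ₁ * σ₂ = 0)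
    (hτ : ∀ s, τ s = σ₁ / κ s ^ 2) :
    ∀ s ∈ I,
      (deriv (fun u => deriv κ u / κ u) s + κ s ^ 2 - τ s ^ 2) / τ s - τ s = σ₂ ∧
      (deriv (fun u => deriv κ u / κ u) s + κ s ^ 2 - τ s ^ 2) +
          (deriv κ s / κ s + deriv τ s / τ s) ^ 2 + κ s ^ 2 = -σ₃ := by
  intro s hs
  have hmem : I ∈ nhds s := hIopen.mem_nhds hs
  have hκd : ContDiffOn ℝ (⊤ : ℕ∞) (deriv κ) I := hκ.deriv_of_isOpen hIopen (by simp)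
  have h1 : HasDerivAt κ (deriv κ s) s :=
    (((hκ.differentiableOn (by simp)) s hs).differentiableAt hmem).hasDerivAt
  have h2 : HasDerivAt (deriv κ) (deriv (deriv κ) s) s :=
    (((hκd.differentiableOn (by simp)) s hs).differentiableAt hmem).hasDerivAt
  set k := κ s
  set k' := deriv κ s
  set k'' := deriv (deriv κ) s
  have hk0 : k ≠ 0 := (hκpos s hs).ne'
  have hk2 : k ^ 2 ≠ 0 := pow_ne_zero _ hk0
  have hk'0 : k' ≠ 0 := hκ' s hs
  -- derivative of the ODE
  have hF : HasDerivAt (fun u => (deriv κ u) ^ 2 + κ u ^ 4 + σ₃ * κ u ^ 2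
      + σ₁ ^ 2 / κ u ^ 2 + σ₁ * σ₂)
      ((2 * k' ^ 1 * k'' + 4 * k ^ 3 * k' + σ₃ * (2 * k ^ 1 * k'))
        + (0 * k ^ 2 - σ₁ ^ 2 * (2 * k ^ 1 * k')) / (k ^ 2) ^ 2 + 0) s := by
    exact ((((h2.pow 2).add (h1.pow 4)).add ((h1.pow 2).const_mul σ₃)).add
      ((hasDerivAt_const s (σ₁ ^ 2)).div (h1.pow 2) hk2)).add
      (hasDerivAt_const s (σ₁ * σ₂))
  have hev : (fun u => (deriv κ u) ^ 2 + κ u ^ 4 + σ₃ * κ u ^ 2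
      + σ₁ ^ 2 / κ u ^ 2 + σ₁ * σ₂) =ᶠ[nhds s] fun _ => (0 : ℝ) := by
    filter_upwards [hmem] with u hu
    exact hode u hu
  have hE : (2 * k' ^ 1 * k'' + 4 * k ^ 3 * k' + σ₃ * (2 * k ^ 1 * k'))
        + (0 * k ^ 2 - σ₁ ^ 2 * (2 * k ^ 1 * k')) / (k ^ 2) ^ 2 + 0 = 0 := by
    have := hF.deriv
    rw [hev.deriv_eq] at this
    simpa using this.symm
  -- second derivative value
  have hk'' : k'' = -2 * k ^ 3 - σ₃ * k + σ₁ ^ 2 / k ^ 3 := by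
    have h := hE
    field_simp at h
    have key : (2 * k' * k ^ 2) *
        (k'' * k ^ 3 - ((-2 * k ^ 3 - σ₃ * k) * k ^ 3 + σ₁ ^ 2)) = 0 := by
      linear_combination k ^ 2 * h
    have hne : (2 * k' * k ^ 2) ≠ 0 := by positivity
    have h' := sub_eq_zero.mp ((mul_eq_zero.mp key).resolve_left hne)
    field_simp
    linarith [h']
  -- deriv of κ'/κ
  have hD : deriv (fun u => deriv κ u / κ u) s = (k'' * k - k' * k') / k ^ 2 :=
    (h2.div h1 hk0).deriv
  -- τ as a function
  have hτfun : τ = fun u => σ₁ / κ u ^ 2 := funext hτ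
  have hτ' : deriv τ s = (0 * k ^ 2 - σ₁ * (2 * k ^ 1 * k')) / (k ^ 2) ^ 2 := by
    rw [hτfun]
    exact ((hasDerivAt_const s σ₁).div (h1.pow 2) hk2).deriv
  have hτs : τ s = σ₁ / k ^ 2 := hτ s
  have hodes := hode s hs
  constructor
  · rw [hD, hτs, hk'']
    field_simp
    have hodes' : k' ^ 2 + k ^ 4 + σ₃ * k ^ 2 + σ₁ ^ 2 / k ^ 2 + σ₁ * σ₂ = 0 := hodes
    field_simp at hodes'
    linear_combination (-1 : ℝ) * hodes'
  · rw [hD, hτs, hτ', hk'']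
    field_simp
    ring
end

section
/- Let A, B ∈ (0,1) and let w : I → ℝ be smooth, and define α'(s) = (A cos w(s), B sin w(s), α₃'(s)) with α₃'(s) = √(1 − A²cos²w(s) − B²sin²w(s)) > 0. Then the scalar triple product satisfies (α', α'', α''') = AB(1 + A²B² − A² − B²)·(w'/α₃')³. -/
open Real Matrix

/-- For the unit-speed curve with
α'(s) = (A cos w(s), B sin w(s), α₃'(s)), α₃'(s) = √(1−A²cos²w−B²sin²w) > 0,
the scalar triple product (α',α'',α''') equals AB(1+A²B²−A²−B²)(w'/α₃')³. -/
theorem stmt_12 (I : Set ℝ) (hIopen : IsOpen I) (A B : ℝ)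
    (hA : A ∈ Set.Ioo (0:ℝ) 1) (hB : B ∈ Set.Ioo (0:ℝ) 1)
    (w : ℝ → ℝ) (hw : ContDiffOn ℝ (⊤ : ℕ∞) w I)
    (α : ℝ → Fin 3 → ℝ) (hα : ContDiffOn ℝ (⊤ : ℕ∞) α I)
    (g : ℝ → ℝ)
    (hg : ∀ s ∈ I, g s = Real.sqrt (1 - A ^ 2 * Real.cos (w s) ^ 2 - B ^ 2 * Real.sin (w s) ^ 2))
    (hgpos : ∀ s ∈ I, 0 < g s)
    (hd : ∀ s ∈ I, deriv α s = ![A * Real.cos (w s), B * Real.sin (w s), g s]) :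
    ∀ s ∈ I,
      (deriv α s ⨯₃ deriv (deriv α) s) ⬝ᵥ deriv (deriv (deriv α)) s =
        A * B * (1 + A ^ 2 * B ^ 2 - A ^ 2 - B ^ 2) * (deriv w s / g s) ^ 3 := by
  have hwI : ∀ t ∈ I, HasDerivAt w (deriv w t) t := fun t ht =>
    (((hw.differentiableOn (by simp)) t ht).differentiableAt (hIopen.mem_nhds ht)).hasDerivAt
  have hw1 : ContDiffOn ℝ (⊤ : ℕ∞) (deriv w) I := hw.deriv_of_isOpen hIopen (by simp)
  have hwI2 : ∀ t ∈ I, HasDerivAt (deriv w) (deriv (deriv w) t) t := fun t ht =>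
    (((hw1.differentiableOn (by simp)) t ht).differentiableAt (hIopen.mem_nhds ht)).hasDerivAt
  set φ : ℝ → ℝ := fun t => 1 - A ^ 2 * Real.cos (w t) ^ 2 - B ^ 2 * Real.sin (w t) ^ 2 with hφdef
  set G : ℝ → ℝ := fun t => Real.sqrt (φ t) with hGdef
  have hgG : ∀ t ∈ I, g t = G t := fun t ht => hg t ht
  have hGpos : ∀ t ∈ I, 0 < G t := fun t ht => (hgG t ht) ▸ hgpos t ht
  have hφpos : ∀ t ∈ I, 0 < φ t := fun t ht => Real.sqrt_pos.mp (hGpos t ht)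
  have hcos : ∀ t ∈ I, HasDerivAt (fun u => Real.cos (w u)) (-Real.sin (w t) * deriv w t) t :=
    fun t ht => (Real.hasDerivAt_cos (w t)).comp t (hwI t ht)
  have hsin : ∀ t ∈ I, HasDerivAt (fun u => Real.sin (w u)) (Real.cos (w t) * deriv w t) t :=
    fun t ht => (Real.hasDerivAt_sin (w t)).comp t (hwI t ht)
  have hφ' : ∀ t ∈ I, HasDerivAt φ
      (2 * (A ^ 2 - B ^ 2) * Real.sin (w t) * Real.cos (w t) * deriv w t) t := by
    intro t ht
    have h := ((hasDerivAt_const t (1:ℝ)).fun_sub (((hcos t ht).fun_pow 2).const_mul (A ^ 2))).fun_sub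
      (((hsin t ht).fun_pow 2).const_mul (B ^ 2))
    refine h.congr_deriv ?_
    ring
  have hG' : ∀ t ∈ I, HasDerivAt G
      ((A ^ 2 - B ^ 2) * Real.sin (w t) * Real.cos (w t) * deriv w t / G t) t := by
    intro t ht
    have h := (hφ' t ht).sqrt (ne_of_gt (hφpos t ht))
    convert h using 1
    have hne : G t ≠ 0 := ne_of_gt (hGpos t ht)
    rw [hGdef]
    field_simp
  have hF1 : ∀ t ∈ I, HasDerivAt
      (fun u => (![A * Real.cos (w u), B * Real.sin (w u), G u] : Fin 3 → ℝ))
      (![-(A * Real.sin (w t) * deriv w t), B * Real.cos (w t) * deriv w t,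
        (A ^ 2 - B ^ 2) * Real.sin (w t) * Real.cos (w t) * deriv w t / G t]) t := by
    intro t ht
    rw [hasDerivAt_pi]
    intro i
    fin_cases i
    · show HasDerivAt (fun u => A * Real.cos (w u)) (-(A * Real.sin (w t) * deriv w t)) t
      have h := (hcos t ht).const_mul A
      refine h.congr_deriv ?_
      ring
    · show HasDerivAt (fun u => B * Real.sin (w u)) (B * Real.cos (w t) * deriv w t) t
      have h := (hsin t ht).const_mul B
      refine h.congr_deriv ?_
      ring
    · show HasDerivAt G ((A ^ 2 - B ^ 2) * Real.sin (w t) * Real.cos (w t) * deriv w t / G t) t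
      exact hG' t ht
  have hd1 : ∀ t ∈ I, deriv α t = ![A * Real.cos (w t), B * Real.sin (w t), G t] :=
    fun t ht => by rw [hd t ht, hgG t ht]
  have hd2 : ∀ t ∈ I, deriv (deriv α) t =
      ![-(A * Real.sin (w t) * deriv w t), B * Real.cos (w t) * deriv w t,
        (A ^ 2 - B ^ 2) * Real.sin (w t) * Real.cos (w t) * deriv w t / G t] := by
    intro t ht
    have heq : deriv α =ᶠ[nhds t]
        (fun u => (![A * Real.cos (w u), B * Real.sin (w u), G u] : Fin 3 → ℝ)) :=
      Filter.eventuallyEq_of_mem (hIopen.mem_nhds ht) (fun u hu => hd1 u hu)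
    rw [heq.deriv_eq, (hF1 t ht).deriv]
  intro s hs
  have hEne : G s ≠ 0 := ne_of_gt (hGpos s hs)
  have hF2 : HasDerivAt
      (fun u => (![-(A * Real.sin (w u) * deriv w u), B * Real.cos (w u) * deriv w u,
        (A ^ 2 - B ^ 2) * Real.sin (w u) * Real.cos (w u) * deriv w u / G u] : Fin 3 → ℝ))
      (![A * (-Real.cos (w s) * deriv w s ^ 2 - Real.sin (w s) * deriv (deriv w) s),
        B * (-Real.sin (w s) * deriv w s ^ 2 + Real.cos (w s) * deriv (deriv w) s),
        (A ^ 2 - B ^ 2) * ((Real.cos (w s) ^ 2 - Real.sin (w s) ^ 2) * deriv w s ^ 2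
            + Real.sin (w s) * Real.cos (w s) * deriv (deriv w) s) / G s
          - ((A ^ 2 - B ^ 2) * Real.sin (w s) * Real.cos (w s) * deriv w s) ^ 2 / G s ^ 3]) s := by
    rw [hasDerivAt_pi]
    intro i
    fin_cases i
    · show HasDerivAt (fun u => -(A * Real.sin (w u) * deriv w u))
        (A * (-Real.cos (w s) * deriv w s ^ 2 - Real.sin (w s) * deriv (deriv w) s)) s
      have h := (((hsin s hs).const_mul A).fun_mul (hwI2 s hs)).fun_neg
      refine h.congr_deriv ?_
      ring
    · show HasDerivAt (fun u => B * Real.cos (w u) * deriv w u)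
        (B * (-Real.sin (w s) * deriv w s ^ 2 + Real.cos (w s) * deriv (deriv w) s)) s
      have h := ((hcos s hs).const_mul B).fun_mul (hwI2 s hs)
      refine h.congr_deriv ?_
      ring
    · show HasDerivAt
        (fun u => (A ^ 2 - B ^ 2) * Real.sin (w u) * Real.cos (w u) * deriv w u / G u)
        ((A ^ 2 - B ^ 2) * ((Real.cos (w s) ^ 2 - Real.sin (w s) ^ 2) * deriv w s ^ 2
            + Real.sin (w s) * Real.cos (w s) * deriv (deriv w) s) / G s
          - ((A ^ 2 - B ^ 2) * Real.sin (w s) * Real.cos (w s) * deriv w s) ^ 2 / G s ^ 3) s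
      have hN := (((hsin s hs).const_mul (A ^ 2 - B ^ 2)).fun_mul (hcos s hs)).fun_mul (hwI2 s hs)
      have h := hN.fun_div (hG' s hs) hEne
      refine h.congr_deriv ?_
      field_simp
      ring
  have hd3 : deriv (deriv (deriv α)) s =
      ![A * (-Real.cos (w s) * deriv w s ^ 2 - Real.sin (w s) * deriv (deriv w) s),
        B * (-Real.sin (w s) * deriv w s ^ 2 + Real.cos (w s) * deriv (deriv w) s),
        (A ^ 2 - B ^ 2) * ((Real.cos (w s) ^ 2 - Real.sin (w s) ^ 2) * deriv w s ^ 2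
            + Real.sin (w s) * Real.cos (w s) * deriv (deriv w) s) / G s
          - ((A ^ 2 - B ^ 2) * Real.sin (w s) * Real.cos (w s) * deriv w s) ^ 2 / G s ^ 3] := by
    have heq : deriv (deriv α) =ᶠ[nhds s]
        (fun u => (![-(A * Real.sin (w u) * deriv w u), B * Real.cos (w u) * deriv w u,
          (A ^ 2 - B ^ 2) * Real.sin (w u) * Real.cos (w u) * deriv w u / G u] : Fin 3 → ℝ)) :=
      Filter.eventuallyEq_of_mem (hIopen.mem_nhds hs) (fun u hu => hd2 u hu)
    rw [heq.deriv_eq, hF2.deriv]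
  have hE2 : G s ^ 2 = 1 - A ^ 2 * Real.cos (w s) ^ 2 - B ^ 2 * Real.sin (w s) ^ 2 :=
    Real.sq_sqrt (le_of_lt (hφpos s hs))
  have hsc : Real.sin (w s) ^ 2 + Real.cos (w s) ^ 2 = 1 := Real.sin_sq_add_cos_sq (w s)
  rw [hd1 s hs, hd2 s hs, hd3, hgG s hs]
  rw [cross_apply]
  simp only [Matrix.cons_val_zero, Matrix.cons_val_one, Matrix.head_cons, Matrix.cons_val_two,
    Matrix.tail_cons, dotProduct, Fin.sum_univ_three]
  set c := Real.cos (w s)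
  set si := Real.sin (w s)
  set p := deriv w s
  set q := deriv (deriv w) s
  set E := G s
  field_simp
  ring_nf
  linear_combination ((1) * A * B * p ^ 3 * E ^ 2 * c ^ 2 + (1) * A * B * p ^ 3 * E ^ 2 * si ^ 2 + (-1) * A ^ 3 * B * p ^ 3 * si ^ 4 + (-1) * A * B ^ 3 * p ^ 3 * c ^ 4 + (1) * A * B * p ^ 3 * c ^ 2 + (-1) * A * B ^ 3 * p ^ 3 * c ^ 2 * si ^ 2 + (-1) * A ^ 3 * B * p ^ 3 * c ^ 2 * si ^ 2 + (1) * A * B * p ^ 3 * si ^ 2) * hE2 + ((2) * A ^ 3 * B ^ 3 * p ^ 3 * c ^ 2 * si ^ 2 + (-1) * A ^ 3 * B * p ^ 3 * si ^ 2 + (1) * A ^ 3 * B ^ 3 * p ^ 3 * si ^ 4 + (-1) * A * B ^ 3 * p ^ 3 * c ^ 2 + (-1) * A ^ 3 * B * p ^ 3 * c ^ 2 + (1) * A * B * p ^ 3 + (-1) * A * B ^ 3 * p ^ 3 * si ^ 2 + (1) * A ^ 3 * B ^ 3 * p ^ 3 * c ^ 2 + (-1) * A ^ 3 * B * p ^ 3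 + (1) * A ^ 3 * B ^ 3 * p ^ 3 * si ^ 2 + (-1) * A * B ^ 3 * p ^ 3 + (1) * A ^ 3 * B ^ 3 * p ^ 3 * c ^ 4 + (1) * A ^ 3 * B ^ 3 * p ^ 3) * hsc
end

section
/- Let A, B ∈ (0,1), w : I → ℝ smooth, and α'(s) = (A cos w(s), B sin w(s), α₃'(s)) with α₃'(s) = √(1 − A²cos²w(s) − B²sin²w(s)) > 0. Then α'(s) × α''(s) = (w'(s)/α₃'(s))·(B(A²−1)cos w(s), A(B²−1)sin w(s), AB·α₃'(s)), and consequently κ² − (w')² = (A²+B²−A²B²−1)·(w'/α₃')², where κ = |α' × α''|. -/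
open Real Matrix

/-- For the unit-speed curve with
α'(s) = (A cos w(s), B sin w(s), α₃'(s)), α₃'(s) = √(1−A²cos²w−B²sin²w) > 0:
α'×α'' = (w'/α₃')·(B(A²−1)cos w, A(B²−1)sin w, AB α₃') and
κ² − (w')² = (A²+B²−A²B²−1)(w'/α₃')² where κ = |α'×α''|. -/
theorem stmt_13 (I : Set ℝ) (hIopen : IsOpen I) (A B : ℝ)
    (hA : A ∈ Set.Ioo (0:ℝ) 1) (hB : B ∈ Set.Ioo (0:ℝ) 1)
    (w : ℝ → ℝ) (hw : ContDiffOn ℝ (⊤ : ℕ∞) w I)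
    (α : ℝ → Fin 3 → ℝ) (hα : ContDiffOn ℝ (⊤ : ℕ∞) α I)
    (g : ℝ → ℝ)
    (hg : ∀ s ∈ I, g s = Real.sqrt (1 - A ^ 2 * Real.cos (w s) ^ 2 - B ^ 2 * Real.sin (w s) ^ 2))
    (hgpos : ∀ s ∈ I, 0 < g s)
    (hd : ∀ s ∈ I, deriv α s = ![A * Real.cos (w s), B * Real.sin (w s), g s]) :
    ∀ s ∈ I,
      deriv α s ⨯₃ deriv (deriv α) s =
        (deriv w s / g s) •
          ![B * (A ^ 2 - 1) * Real.cos (w s), A * (B ^ 2 - 1) * Real.sin (w s),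
            A * B * g s] ∧
      (Real.sqrt ((deriv α s ⨯₃ deriv (deriv α) s) ⬝ᵥ (deriv α s ⨯₃ deriv (deriv α) s))) ^ 2 -
          (deriv w s) ^ 2 =
        (A ^ 2 + B ^ 2 - A ^ 2 * B ^ 2 - 1) * (deriv w s / g s) ^ 2 := by
  intro s hs
  have hsI : I ∈ nhds s := hIopen.mem_nhds hs
  have hw' : HasDerivAt w (deriv w s) s :=
    ((hw.contDiffAt hsI).differentiableAt (by simp)).hasDerivAt
  set p := deriv w s with hp
  set c := Real.cos (w s) with hc
  set sn := Real.sin (w s) with hsn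
  have hgs := hg s hs
  have hgp := hgpos s hs
  have hupos : 0 < 1 - A ^ 2 * c ^ 2 - B ^ 2 * sn ^ 2 := by
    have := hgp; rw [hgs] at this; exact Real.sqrt_pos.mp this
  have hγsq : g s ^ 2 = 1 - A ^ 2 * c ^ 2 - B ^ 2 * sn ^ 2 := by
    rw [hgs]; exact Real.sq_sqrt hupos.le
  have hcos : HasDerivAt (fun t => Real.cos (w t)) (-sn * p) s := hw'.cos
  have hsin : HasDerivAt (fun t => Real.sin (w t)) (c * p) s := hw'.sin
  have h1 : HasDerivAt (fun t => A * Real.cos (w t)) (A * (-sn * p)) s := hcos.const_mul A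
  have h2 : HasDerivAt (fun t => B * Real.sin (w t)) (B * (c * p)) s := hsin.const_mul B
  have hu : HasDerivAt
      (fun t => 1 - A ^ 2 * Real.cos (w t) ^ 2 - B ^ 2 * Real.sin (w t) ^ 2)
      ((A ^ 2 - B ^ 2) * (2 * sn * c * p)) s := by
    have := (((hcos.pow 2).const_mul (A ^ 2)).const_sub 1).sub ((hsin.pow 2).const_mul (B ^ 2))
    refine this.congr_deriv ?_
    ring
  have h3 : HasDerivAt
      (fun t => Real.sqrt (1 - A ^ 2 * Real.cos (w t) ^ 2 - B ^ 2 * Real.sin (w t) ^ 2))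
      ((A ^ 2 - B ^ 2) * (2 * sn * c * p) / (2 * g s)) s := by
    have := hu.sqrt hupos.ne'
    rw [← hgs] at this
    exact this
  have hF : HasDerivAt
      (fun t => (![A * Real.cos (w t), B * Real.sin (w t),
        Real.sqrt (1 - A ^ 2 * Real.cos (w t) ^ 2 - B ^ 2 * Real.sin (w t) ^ 2)] : Fin 3 → ℝ))
      (![A * (-sn * p), B * (c * p), (A ^ 2 - B ^ 2) * (2 * sn * c * p) / (2 * g s)]) s := by
    rw [hasDerivAt_pi]
    intro i
    fin_cases i
    · simpa using h1
    · simpa using h2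
    · simpa using h3
  have heq : deriv α =ᶠ[nhds s] fun t =>
      (![A * Real.cos (w t), B * Real.sin (w t),
        Real.sqrt (1 - A ^ 2 * Real.cos (w t) ^ 2 - B ^ 2 * Real.sin (w t) ^ 2)] : Fin 3 → ℝ) := by
    filter_upwards [hsI] with t ht
    rw [hd t ht, hg t ht]
  have hdd : deriv (deriv α) s =
      ![A * (-sn * p), B * (c * p), (A ^ 2 - B ^ 2) * (2 * sn * c * p) / (2 * g s)] := by
    rw [heq.deriv_eq]; exact hF.deriv
  have hgne : g s ≠ 0 := hgp.ne'
  have hpyth : sn ^ 2 + c ^ 2 = 1 := Real.sin_sq_add_cos_sq (w s)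
  have hcross : deriv α s ⨯₃ deriv (deriv α) s =
      (p / g s) • ![B * (A ^ 2 - 1) * c, A * (B ^ 2 - 1) * sn, A * B * g s] := by
    rw [hd s hs, hdd]
    funext i
    fin_cases i <;>
      simp only [crossProduct, LinearMap.mk₂_apply, Matrix.cons_val_zero, Matrix.cons_val_one,
        Matrix.head_cons, Matrix.cons_val_two, Matrix.tail_cons, Pi.smul_apply, smul_eq_mul, Fin.isValue] <;>
      simp only [Fin.zero_eta, Fin.mk_one, Fin.reduceFinMk, Matrix.cons_val_zero, Matrix.cons_val_one,
        Matrix.cons_val_two, Matrix.head_cons, Matrix.tail_cons] <;>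
      field_simp <;>
      simp only [← hc, ← hsn] <;>
      first
        | linear_combination (-(B*c*p)) * hγsq + (B*c*p*A^2) * hpyth
        | linear_combination (-(A*sn*p)) * hγsq + (A*sn*p*B^2) * hpyth
        | linear_combination (A*B*p) * hpyth
  refine ⟨hcross, ?_⟩
  rw [hcross]
  have hdot : ((p / g s) • ![B * (A ^ 2 - 1) * c, A * (B ^ 2 - 1) * sn, A * B * g s]) ⬝ᵥ
      ((p / g s) • ![B * (A ^ 2 - 1) * c, A * (B ^ 2 - 1) * sn, A * B * g s]) =
      (p / g s) ^ 2 * ((B * (A ^ 2 - 1) * c) ^ 2 + (A * (B ^ 2 - 1) * sn) ^ 2 +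
        (A * B * g s) ^ 2) := by
    simp [dotProduct, Fin.sum_univ_three]
    ring
  rw [hdot, Real.sq_sqrt (by positivity)]
  field_simp
  linear_combination ((A^2*B^2-1)*p^2) * hγsq + ((A^2+B^2-2*A^2*B^2)*p^2) * hpyth
end

section
/- Let λ₁ ≤ λ₂ < 0 < λ₃, A = √(λ₃/(λ₃−λ₁)), B = √(λ₃/(λ₃−λ₂)), and let α, defined by α'(s) = (A cos w(s), B sin w(s), √(1−A²cos²w(s)−B²sin²w(s))), satisfy w'(s)/α₃'(s) = √((λ₃−λ₁)(λ₃−λ₂)) for all s (same for a second parameter t). Then for all s, t: ⟨α'(s) × α''(s), α'(t)⟩ = ⟨α'(s), α'(t) × α''(t)⟩. -/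
open Real Matrix

/-- For λ₁ ≤ λ₂ < 0 < λ₃, A = √(λ₃/(λ₃−λ₁)), B = √(λ₃/(λ₃−λ₂)),
and a unit-speed curve with α' = (A cos w, B sin w, α₃'),
α₃' = √(1−A²cos²w−B²sin²w), satisfying w'/α₃' = √((λ₃−λ₁)(λ₃−λ₂)), the
minimality condition ⟨α'(s)×α''(s), α'(t)⟩ = ⟨α'(s), α'(t)×α''(t)⟩ holds. -/
theorem stmt_14 (I : Set ℝ) (hIopen : IsOpen I)
    (l₁ l₂ l₃ : ℝ) (h12 : l₁ ≤ l₂) (h2 : l₂ < 0) (h3 : 0 < l₃)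
    (A B : ℝ) (hA : A = Real.sqrt (l₃ / (l₃ - l₁))) (hB : B = Real.sqrt (l₃ / (l₃ - l₂)))
    (w : ℝ → ℝ) (hw : ContDiffOn ℝ (⊤ : ℕ∞) w I)
    (α : ℝ → Fin 3 → ℝ) (hα : ContDiffOn ℝ (⊤ : ℕ∞) α I)
    (g : ℝ → ℝ)
    (hg : ∀ s ∈ I, g s = Real.sqrt (1 - A ^ 2 * Real.cos (w s) ^ 2 - B ^ 2 * Real.sin (w s) ^ 2))
    (hgpos : ∀ s ∈ I, 0 < g s)
    (hd : ∀ s ∈ I, deriv α s = ![A * Real.cos (w s), B * Real.sin (w s), g s])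
    (hw' : ∀ s ∈ I, deriv w s / g s = Real.sqrt ((l₃ - l₁) * (l₃ - l₂))) :
    ∀ s ∈ I, ∀ t ∈ I,
      (deriv α s ⨯₃ deriv (deriv α) s) ⬝ᵥ deriv α t =
        deriv α s ⬝ᵥ (deriv α t ⨯₃ deriv (deriv α) t) := by
  set k : ℝ := Real.sqrt ((l₃ - l₁) * (l₃ - l₂)) with hk
  -- positivity of the radicand
  have hrpos : ∀ u ∈ I, (0:ℝ) < 1 - A ^ 2 * Real.cos (w u) ^ 2 - B ^ 2 * Real.sin (w u) ^ 2 := by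
    intro u hu
    by_contra h
    push_neg at h
    have h0 : Real.sqrt (1 - A ^ 2 * Real.cos (w u) ^ 2 - B ^ 2 * Real.sin (w u) ^ 2) = 0 :=
      Real.sqrt_eq_zero'.mpr h
    have := hgpos u hu
    rw [hg u hu, h0] at this
    exact lt_irrefl 0 this
  have hg2 : ∀ u ∈ I, g u ^ 2 = 1 - A ^ 2 * Real.cos (w u) ^ 2 - B ^ 2 * Real.sin (w u) ^ 2 := by
    intro u hu
    rw [hg u hu]
    exact Real.sq_sqrt (hrpos u hu).le
  have hwk : ∀ u ∈ I, deriv w u = k * g u := by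
    intro u hu
    have := hw' u hu
    rw [div_eq_iff (hgpos u hu).ne'] at this
    rw [this]
  -- compute the second derivative
  have key : ∀ u ∈ I, deriv (deriv α) u =
      ![-(A * Real.sin (w u)) * (k * g u), (B * Real.cos (w u)) * (k * g u),
        (A ^ 2 - B ^ 2) * (Real.sin (w u) * Real.cos (w u)) * k] := by
    intro u hu
    have hgu := hgpos u hu
    have hru := hrpos u hu
    have hmem := hIopen.mem_nhds hu
    have hwd : HasDerivAt w (deriv w u) u :=
      ((hw.contDiffAt hmem).differentiableAt (by simp)).hasDerivAt
    have hc : HasDerivAt (fun v => Real.cos (w v)) (-Real.sin (w u) * deriv w u) u :=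
      (Real.hasDerivAt_cos (w u)).comp u hwd
    have hsn : HasDerivAt (fun v => Real.sin (w v)) (Real.cos (w u) * deriv w u) u :=
      (Real.hasDerivAt_sin (w u)).comp u hwd
    have hr : HasDerivAt
        (fun v => 1 - A ^ 2 * Real.cos (w v) ^ 2 - B ^ 2 * Real.sin (w v) ^ 2)
        (0 - A ^ 2 * ((2 : ℕ) * Real.cos (w u) ^ 1 * (-Real.sin (w u) * deriv w u))
          - B ^ 2 * ((2 : ℕ) * Real.sin (w u) ^ 1 * (Real.cos (w u) * deriv w u))) u := by
      exact ((hasDerivAt_const u (1:ℝ)).sub ((hc.pow 2).const_mul (A ^ 2))).sub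
        ((hsn.pow 2).const_mul (B ^ 2))
    have hsq : HasDerivAt
        (fun v => Real.sqrt (1 - A ^ 2 * Real.cos (w v) ^ 2 - B ^ 2 * Real.sin (w v) ^ 2))
        ((0 - A ^ 2 * ((2 : ℕ) * Real.cos (w u) ^ 1 * (-Real.sin (w u) * deriv w u))
          - B ^ 2 * ((2 : ℕ) * Real.sin (w u) ^ 1 * (Real.cos (w u) * deriv w u)))
          / (2 * Real.sqrt (1 - A ^ 2 * Real.cos (w u) ^ 2 - B ^ 2 * Real.sin (w u) ^ 2))) u :=
      hr.sqrt hru.ne'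
    set f : ℝ → Fin 3 → ℝ := fun v =>
      ![A * Real.cos (w v), B * Real.sin (w v),
        Real.sqrt (1 - A ^ 2 * Real.cos (w v) ^ 2 - B ^ 2 * Real.sin (w v) ^ 2)] with hf
    have hEq : deriv α =ᶠ[nhds u] f := by
      filter_upwards [hmem] with v hv
      rw [hd v hv, hg v hv]
    have hF : HasDerivAt f
        ![A * (-Real.sin (w u) * deriv w u), B * (Real.cos (w u) * deriv w u),
          (0 - A ^ 2 * ((2 : ℕ) * Real.cos (w u) ^ 1 * (-Real.sin (w u) * deriv w u))
            - B ^ 2 * ((2 : ℕ) * Real.sin (w u) ^ 1 * (Real.cos (w u) * deriv w u)))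
            / (2 * Real.sqrt (1 - A ^ 2 * Real.cos (w u) ^ 2 - B ^ 2 * Real.sin (w u) ^ 2))] u := by
      rw [hasDerivAt_pi]
      intro i
      fin_cases i
      · simpa [hf] using hc.const_mul A
      · simpa [hf] using hsn.const_mul B
      · simpa [hf] using hsq
    have hgusqrt : Real.sqrt (1 - A ^ 2 * Real.cos (w u) ^ 2 - B ^ 2 * Real.sin (w u) ^ 2)
        = g u := (hg u hu).symm
    have e1 : A * (-Real.sin (w u) * deriv w u) = -(A * Real.sin (w u)) * (k * g u) := by
      rw [hwk u hu]; ring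
    have e2 : B * (Real.cos (w u) * deriv w u) = B * Real.cos (w u) * (k * g u) := by
      rw [hwk u hu]; ring
    have e3 : (0 - A ^ 2 * ((2 : ℕ) * Real.cos (w u) ^ 1 * (-Real.sin (w u) * deriv w u))
          - B ^ 2 * ((2 : ℕ) * Real.sin (w u) ^ 1 * (Real.cos (w u) * deriv w u)))
          / (2 * Real.sqrt (1 - A ^ 2 * Real.cos (w u) ^ 2 - B ^ 2 * Real.sin (w u) ^ 2))
        = (A ^ 2 - B ^ 2) * (Real.sin (w u) * Real.cos (w u)) * k := by
      rw [hgusqrt, hwk u hu]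
      push_cast
      field_simp
      ring
    rw [hEq.deriv_eq, hF.deriv, e1, e2, e3]
  intro s hs t ht
  have hg2s := hg2 s hs
  have hg2t := hg2 t ht
  rw [hd s hs, hd t ht, key s hs, key t ht]
  simp only [crossProduct, dotProduct, Fin.sum_univ_three, LinearMap.mk₂_apply,
    Matrix.cons_val_zero, Matrix.cons_val_one, Matrix.head_cons, Matrix.cons_val_two,
    Matrix.tail_cons]
  have hps : Real.sin (w s) ^ 2 + Real.cos (w s) ^ 2 = 1 := Real.sin_sq_add_cos_sq (w s)
  have hpt : Real.sin (w t) ^ 2 + Real.cos (w t) ^ 2 = 1 := Real.sin_sq_add_cos_sq (w t)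
  linear_combination (-(A * B * k * (Real.cos (w s) * Real.cos (w t) +
      Real.sin (w s) * Real.sin (w t)))) * hg2s +
    (A * B * k * (Real.cos (w s) * Real.cos (w t) + Real.sin (w s) * Real.sin (w t))) * hg2t +
    (A * B * k * (g s * g t + A ^ 2 * Real.cos (w s) * Real.cos (w t) +
      B ^ 2 * Real.sin (w s) * Real.sin (w t))) * hps -
    (A * B * k * (g s * g t + A ^ 2 * Real.cos (w s) * Real.cos (w t) +
      B ^ 2 * Real.sin (w s) * Real.sin (w t))) * hpt
end

section
/- Let L(s) be as above with constants c₁, c₂, c₃, i.e., L(s)t = κb, L(s)n = −τn − Rb, L(s)b = κt − Rn + (Σ/τ)b along a unit-speed curve α with Frenet frame (t, n, b), κ²τ = c₁ ≠ 0 and Σ/τ − τ = c₂. Then the map s ↦ L(s) (as a linear operator on ℝ³) is constant: d/ds [L(s)v] = L(s)(dv/ds) for v ∈ {t, n, b}, using the Frenet equations t' = κn, n' = −κt + τb, b' = −τn. -/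
open Real Matrix

lemma const_of_hasDerivAt_zero' {E : Type*} [NormedAddCommGroup E] [NormedSpace ℝ E]
    {f : ℝ → E} {I : Set ℝ} (hIopen : IsOpen I) (hIconn : IsPreconnected I)
    (hf : ∀ x ∈ I, HasDerivAt f 0 x) {x y : ℝ} (hx : x ∈ I) (hy : y ∈ I) : f x = f y := by
  have : PreconnectedSpace I := Subtype.preconnectedSpace hIconn
  have hlc : IsLocallyConstant (fun z : I => f z) := by
    rw [IsLocallyConstant.iff_exists_open]
    rintro ⟨z, hz⟩
    obtain ⟨ε, hε, hball⟩ := Metric.isOpen_iff.1 hIopen z hz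
    refine ⟨Subtype.val ⁻¹' Metric.ball z ε, Metric.isOpen_ball.preimage continuous_subtype_val,
      Metric.mem_ball_self hε, ?_⟩
    rintro ⟨w, hw⟩ hwball
    have hconv : Convex ℝ (Metric.ball z ε) := convex_ball z ε
    have key : ∀ u ∈ Metric.ball z ε, fderivWithin ℝ f (Metric.ball z ε) u = 0 := by
      intro u hu
      rw [fderivWithin_of_isOpen Metric.isOpen_ball hu, (hf u (hball hu)).hasFDerivAt.fderiv]
      ext; simp
    exact hconv.is_const_of_fderivWithin_eq_zero
      (fun u hu => (hf u (hball hu)).differentiableAt.differentiableWithinAt)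
      key hwball (Metric.mem_ball_self hε)
  exact hlc.apply_eq_of_preconnectedSpace ⟨x, hx⟩ ⟨y, hy⟩

lemma hasDerivAt_dot' {w : ℝ → Fin 3 → ℝ} {w' : Fin 3 → ℝ} {s : ℝ}
    (h : HasDerivAt w w' s) (v : Fin 3 → ℝ) :
    HasDerivAt (fun u => w u ⬝ᵥ v) (w' ⬝ᵥ v) s := by
  simp only [dotProduct]
  exact HasDerivAt.fun_sum fun j _ => (hasDerivAt_pi.1 h j).mul_const (v j)

/-- Along a unit-speed curve with Frenet frame (T,N,B) satisfying the
Frenet equations, κ > 0, τ ≠ 0, κ²τ = c₁ ≠ 0 and Σ/τ − τ = c₂, the operator L(s)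
defined by L(s)T = κB, L(s)N = −τN − RB, L(s)B = κT − RN + (Σ/τ)B (with
R = κ'/κ + τ'/τ, Σ = (κ'/κ)' + κ² − τ²) is constant in s. -/
theorem stmt_17 (I : Set ℝ) (hIopen : IsOpen I) (hIconn : IsPreconnected I)
    (κ τ : ℝ → ℝ) (hκ : ContDiffOn ℝ (⊤ : ℕ∞) κ I) (hτ : ContDiffOn ℝ (⊤ : ℕ∞) τ I)
    (hκpos : ∀ s ∈ I, 0 < κ s) (hτne : ∀ s ∈ I, τ s ≠ 0)
    (c₁ c₂ : ℝ) (hc₁ne : c₁ ≠ 0)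
    (hc₁ : ∀ s ∈ I, κ s ^ 2 * τ s = c₁)
    (R Sg : ℝ → ℝ)
    (hR : ∀ s ∈ I, R s = deriv κ s / κ s + deriv τ s / τ s)
    (hSg : ∀ s ∈ I, Sg s = deriv (fun u => deriv κ u / κ u) s + κ s ^ 2 - τ s ^ 2)
    (hc₂ : ∀ s ∈ I, Sg s / τ s - τ s = c₂)
    (T N B : ℝ → Fin 3 → ℝ)
    (hT : ContDiffOn ℝ (⊤ : ℕ∞) T I) (hN : ContDiffOn ℝ (⊤ : ℕ∞) N I) (hB : ContDiffOn ℝ (⊤ : ℕ∞) B I)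
    (hfrenet : ∀ s ∈ I,
      deriv T s = κ s • N s ∧
      deriv N s = -κ s • T s + τ s • B s ∧
      deriv B s = -τ s • N s)
    (horth : ∀ s ∈ I,
      T s ⬝ᵥ T s = 1 ∧ N s ⬝ᵥ N s = 1 ∧ B s ⬝ᵥ B s = 1 ∧
      T s ⬝ᵥ N s = 0 ∧ T s ⬝ᵥ B s = 0 ∧ N s ⬝ᵥ B s = 0)
    (L : ℝ → (Fin 3 → ℝ) →ₗ[ℝ] (Fin 3 → ℝ))
    (hL : ∀ s ∈ I,
      L s (T s) = κ s • B s ∧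
      L s (N s) = -τ s • N s - R s • B s ∧
      L s (B s) = κ s • T s - R s • N s + (Sg s / τ s) • B s) :
    ∀ s₁ ∈ I, ∀ s₂ ∈ I, L s₁ = L s₂ := by
  have hκne : ∀ s ∈ I, κ s ≠ 0 := fun s hs => (hκpos s hs).ne'
  -- basic differentiability
  have hκd0 : ∀ s ∈ I, HasDerivAt κ (deriv κ s) s := fun s hs =>
    (((hκ.contDiffAt (hIopen.mem_nhds hs)).differentiableAt (by simp))).hasDerivAt
  have hτd0 : ∀ s ∈ I, HasDerivAt τ (deriv τ s) s := fun s hs =>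
    (((hτ.contDiffAt (hIopen.mem_nhds hs)).differentiableAt (by simp))).hasDerivAt
  -- derivative of the constant κ²τ
  have hprod : ∀ s ∈ I, 2 * κ s * deriv κ s * τ s + κ s ^ 2 * deriv τ s = 0 := by
    intro s hs
    have h1 : HasDerivAt (fun u => κ u ^ 2 * τ u)
        (2 * κ s ^ 1 * deriv κ s * τ s + κ s ^ 2 * deriv τ s) s :=
      ((hκd0 s hs).pow 2).mul (hτd0 s hs)
    have h2 : HasDerivAt (fun u => κ u ^ 2 * τ u) 0 s := by
      refine (hasDerivAt_const s c₁).congr_of_eventuallyEq ?_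
      filter_upwards [hIopen.mem_nhds hs] with u hu using hc₁ u hu
    have := h1.unique h2
    simpa [pow_one] using this
  have hclean : ∀ s ∈ I, 2 * deriv κ s * τ s + κ s * deriv τ s = 0 := by
    intro s hs
    have h2 : κ s * (2 * deriv κ s * τ s + κ s * deriv τ s) = 0 := by
      linear_combination hprod s hs
    exact (mul_eq_zero.mp h2).resolve_left (hκne s hs)
  have hτ'eq : ∀ s ∈ I, deriv τ s = 2 * R s * τ s := by
    intro s hs
    have hk := hκne s hs
    have ht := hτne s hs
    rw [hR s hs]
    field_simp
    linear_combination (-1 : ℝ) * hclean s hs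
  have hE1 : ∀ s ∈ I, deriv κ s + R s * κ s = 0 := by
    intro s hs
    have hk := hκne s hs
    have ht := hτne s hs
    rw [hR s hs]
    field_simp
    linear_combination hclean s hs
  -- derivative of R
  have hRd : ∀ s ∈ I, HasDerivAt R (κ s ^ 2 - τ s ^ 2 - Sg s) s := by
    intro s hs
    have hsm : ContDiffOn ℝ (⊤ : ℕ∞) (deriv κ) I := hκ.deriv_of_isOpen hIopen (by simp)
    have hq : DifferentiableAt ℝ (fun u => deriv κ u / κ u) s :=
      ((hsm.contDiffAt (hIopen.mem_nhds hs)).differentiableAt (by simp)).div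
        ((hκ.contDiffAt (hIopen.mem_nhds hs)).differentiableAt (by simp)) (hκne s hs)
    have h1 : HasDerivAt (fun u => -(deriv κ u / κ u))
        (-(deriv (fun u => deriv κ u / κ u) s)) s := hq.hasDerivAt.neg
    have h2 : HasDerivAt R (-(deriv (fun u => deriv κ u / κ u) s)) s := by
      refine h1.congr_of_eventuallyEq ?_
      filter_upwards [hIopen.mem_nhds hs] with u hu
      have hk := hκne u hu
      have ht := hτne u hu
      rw [hR u hu]
      field_simp
      linear_combination hclean u hu
    have : -(deriv (fun u => deriv κ u / κ u) s) = κ s ^ 2 - τ s ^ 2 - Sg s := by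
      have := hSg s hs; linarith
    rwa [this] at h2
  -- derivative of Sg/τ
  have hgd : ∀ s ∈ I, HasDerivAt (fun u => Sg u / τ u) (2 * R s * τ s) s := by
    intro s hs
    have h1 : HasDerivAt (fun u => τ u + c₂) (deriv τ s) s := (hτd0 s hs).add_const c₂
    have h2 : HasDerivAt (fun u => Sg u / τ u) (deriv τ s) s := by
      refine h1.congr_of_eventuallyEq ?_
      filter_upwards [hIopen.mem_nhds hs] with u hu
      have := hc₂ u hu; linarith
    rwa [hτ'eq s hs] at h2
  -- expansion in the frame
  have hexp : ∀ s ∈ I, ∀ v : Fin 3 → ℝ,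
      (T s ⬝ᵥ v) • T s + (N s ⬝ᵥ v) • N s + (B s ⬝ᵥ v) • B s = v := by
    intro s hs v
    obtain ⟨h1, h2, h3, h4, h5, h6⟩ := horth s hs
    set M : Matrix (Fin 3) (Fin 3) ℝ := Matrix.of ![T s, N s, B s] with hM
    have hMMt : M * Mᵀ = 1 := by
      simp only [dotProduct, Fin.sum_univ_three] at h1 h2 h3 h4 h5 h6
      ext i j
      rw [Matrix.mul_apply]
      simp only [Matrix.transpose_apply, Fin.sum_univ_three]
      fin_cases i <;> fin_cases j <;>
        simp [hM, Matrix.one_apply] <;> linarith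
    have hMtM : Mᵀ * M = 1 := mul_eq_one_comm.mp hMMt
    have hv : Mᵀ *ᵥ (M *ᵥ v) = v := by
      rw [Matrix.mulVec_mulVec, hMtM, Matrix.one_mulVec]
    calc (T s ⬝ᵥ v) • T s + (N s ⬝ᵥ v) • N s + (B s ⬝ᵥ v) • B s
        = Mᵀ *ᵥ (M *ᵥ v) := by
          funext j
          simp [Matrix.mulVec, dotProduct, Fin.sum_univ_three, hM, Matrix.transpose_apply]
          ring
      _ = v := hv
  -- the explicit formula for L
  set F : (Fin 3 → ℝ) → ℝ → (Fin 3 → ℝ) := fun v u =>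
    (T u ⬝ᵥ v) • (κ u • B u) + (N u ⬝ᵥ v) • (-τ u • N u - R u • B u) +
      (B u ⬝ᵥ v) • (κ u • T u - R u • N u + (Sg u / τ u) • B u) with hF
  have key : ∀ s ∈ I, ∀ v, L s v = F v s := by
    intro s hs v
    obtain ⟨l1, l2, l3⟩ := hL s hs
    conv_lhs => rw [← hexp s hs v]
    simp only [map_add, LinearMap.map_smul, l1, l2, l3, hF]
  -- F v has zero derivative on I
  have hFd : ∀ v, ∀ s ∈ I, HasDerivAt (F v) 0 s := by
    intro v s hs
    obtain ⟨fT, fN, fB⟩ := hfrenet s hs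
    have hTd : HasDerivAt T (κ s • N s) s := by
      rw [← fT]
      exact ((hT.contDiffAt (hIopen.mem_nhds hs)).differentiableAt (by simp)).hasDerivAt
    have hNd : HasDerivAt N (-κ s • T s + τ s • B s) s := by
      rw [← fN]
      exact ((hN.contDiffAt (hIopen.mem_nhds hs)).differentiableAt (by simp)).hasDerivAt
    have hBd : HasDerivAt B (-τ s • N s) s := by
      rw [← fB]
      exact ((hB.contDiffAt (hIopen.mem_nhds hs)).differentiableAt (by simp)).hasDerivAt
    have hκd := hκd0 s hs
    have hτd : HasDerivAt τ (2 * R s * τ s) s := by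
      have := hτd0 s hs; rwa [hτ'eq s hs] at this
    have hRd' := hRd s hs
    have hgd' := hgd s hs
    have hcT := hasDerivAt_dot' hTd v
    have hcN := hasDerivAt_dot' hNd v
    have hcB := hasDerivAt_dot' hBd v
    have hv1 := hκd.smul hBd
    have hv2 := ((hτd.neg).smul hNd).sub (hRd'.smul hBd)
    have hv3 := ((hκd.smul hTd).sub (hRd'.smul hNd)).add (hgd'.smul hBd)
    have big := ((hcT.smul hv1).add (hcN.smul hv2)).add (hcB.smul hv3)
    rw [hF]
    convert big using 1
    case e'_4 => rfl
    case e'_5 => rfl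
    case e'_6 => rfl
    · rfl
    have hE1s := hE1 s hs
    have hgeq : Sg s / τ s * τ s = Sg s := div_mul_cancel₀ _ (hτne s hs)
    funext i
    simp only [Pi.add_apply, Pi.sub_apply, Pi.smul_apply, Pi.neg_apply, Pi.zero_apply,
      smul_eq_mul, dotProduct, Fin.sum_univ_three, neg_mul, mul_neg, Pi.smul_apply']
    linear_combination (-(T s 0 * v 0 + T s 1 * v 1 + T s 2 * v 2) * B s i
      - (B s 0 * v 0 + B s 1 * v 1 + B s 2 * v 2) * T s i) * hE1s
      + ((N s 0 * v 0 + N s 1 * v 1 + N s 2 * v 2) * B s i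
      + (B s 0 * v 0 + B s 1 * v 1 + B s 2 * v 2) * N s i) * hgeq
  intro s₁ hs₁ s₂ hs₂
  apply LinearMap.ext
  intro v
  rw [key s₁ hs₁ v, key s₂ hs₂ v]
  exact const_of_hasDerivAt_zero' hIopen hIconn (hFd v) hs₁ hs₂
end
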